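/- Let n ≥ 1 and let p : (Fin n → Fin 3) → ℝ satisfy p(A) = 1, p(B) = p(C) = 0, and p(s) = (1/deg s)·Σ_{t adjacent to s} p(t) for every non-corner state s of the Hanoi graph H_n. Then (1/2)·Σ_{t adjacent to A} p(t) = (5^n − 5·3^(n−1))/(5^n − 3^n). (This is p₁(n), the probability that the random walk started at A, after at least one move, first returns to the corner set {A,B,C} at A.) -/

import Mathlib

/-- The Hanoi graph `H_n`: vertices are states `s : Fin n → Fin 3` (`s k` is the peg
holding the disk of size `k+1`); two distinct states are adjacent iff a single disk moves
and it is topmost on both its source and destination pegs. -/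
def hanoi (n : ℕ) : SimpleGraph (Fin n → Fin 3) where
  Adj s t := ∃ k : Fin n, (∀ j, j ≠ k → s j = t j) ∧ s k ≠ t k ∧
    ∀ j, j < k → s j ≠ s k ∧ s j ≠ t k
  symm := by
    refine ⟨?_⟩
    rintro s t ⟨k, h1, h2, h3⟩
    refine ⟨k, fun j hj => (h1 j hj).symm, h2.symm, fun j hj => ?_⟩
    rw [← h1 j hj.ne]
    exact ⟨(h3 j hj).2, (h3 j hj).1⟩
  loopless := by
    refine ⟨?_⟩
    rintro s ⟨k, _, h2, _⟩
    exact h2 rfl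

instance hanoiAdjDecidable (n : ℕ) : DecidableRel (hanoi n).Adj := fun s t =>
  inferInstanceAs (Decidable (∃ k : Fin n, (∀ j, j ≠ k → s j = t j) ∧ s k ≠ t k ∧
    ∀ j, j < k → s j ≠ s k ∧ s j ≠ t k))

/-- The corner state with all disks on peg `p`. -/
def corner (n : ℕ) (p : Fin 3) : Fin n → Fin 3 := fun _ => p

/-- The state `s½`: the largest disk on the second peg, all other disks on the first peg. -/
def halfState (n : ℕ) : Fin n → Fin 3 := fun k => if (k : ℕ) < n - 1 then 0 else 1

namespace HanoiAux

lemma fin3_eq_neg {a x y : Fin 3} (hxy : x ≠ y) (hx : a ≠ x) (hy : a ≠ y) :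
    a = -(x + y) := by revert hxy hx hy; revert a x y; decide

lemma fin3_neg_ne {x y : Fin 3} (hxy : x ≠ y) : -(x + y) ≠ x ∧ -(x + y) ≠ y := by
  revert hxy; revert x y; decide

lemma snoc_corner (n : ℕ) (r : Fin 3) :
    Fin.snoc (corner n r) r = corner (n + 1) r := by
  funext i
  refine Fin.lastCases ?_ (fun j => ?_) i
  · simp [corner]
  · simp [corner, Fin.snoc_castSucc]

lemma init_corner (n : ℕ) (r : Fin 3) : Fin.init (corner (n + 1) r) = corner n r := rfl

lemma corner_inj {n : ℕ} (hn : 1 ≤ n) {q r : Fin 3} (h : corner n q = corner n r) :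
    q = r := congrFun h ⟨0, hn⟩

lemma eq_corner_iff {n : ℕ} (s : Fin (n + 1) → Fin 3) (q : Fin 3) :
    s = corner (n + 1) q ↔ Fin.init s = corner n q ∧ s (Fin.last n) = q := by
  constructor
  · rintro rfl; exact ⟨rfl, rfl⟩
  · rintro ⟨h1, h2⟩
    rw [← Fin.snoc_init_self s, h1, h2, snoc_corner]

lemma adj_iff (n : ℕ) (s t : Fin (n + 1) → Fin 3) :
    (hanoi (n + 1)).Adj s t ↔
      (s (Fin.last n) = t (Fin.last n) ∧ (hanoi n).Adj (Fin.init s) (Fin.init t)) ∨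
      (Fin.init s = Fin.init t ∧ s (Fin.last n) ≠ t (Fin.last n) ∧
        Fin.init s = corner n (-(s (Fin.last n) + t (Fin.last n)))) := by
  constructor
  · rintro ⟨k, h1, h2, h3⟩
    by_cases hk : k = Fin.last n
    · subst hk
      refine Or.inr ⟨?_, h2, ?_⟩
      · funext j
        exact h1 _ (Fin.castSucc_lt_last j).ne
      · funext j
        exact fin3_eq_neg h2 (h3 _ (Fin.castSucc_lt_last j)).1 (h3 _ (Fin.castSucc_lt_last j)).2
    · obtain ⟨k', rfl⟩ := Fin.exists_castSucc_eq.mpr hk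
      refine Or.inl ⟨h1 _ (by simpa using (Fin.castSucc_lt_last k').ne') , ⟨k', fun j hj => h1 _ ?_, h2, fun j hj => h3 _ ?_⟩⟩
      · exact fun hc => hj (Fin.castSucc_injective _ hc)
      · exact Fin.castSucc_lt_castSucc_iff.mpr hj
  · rintro (⟨hlast, k', h1, h2, h3⟩ | ⟨hinit, hlast, hcor⟩)
    · refine ⟨Fin.castSucc k', fun j hj => ?_, h2, fun j hj => ?_⟩
      · refine Fin.lastCases ?_ (fun j' hj' => ?_) j hj
        · intro _; exact hlast
        · exact h1 j' (fun hc => hj' (by rw [hc]))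
      · have hjlt : j < Fin.last n := lt_of_lt_of_le hj (Fin.castSucc_lt_last k').le
        obtain ⟨j', rfl⟩ := Fin.exists_castSucc_eq.mpr hjlt.ne
        exact h3 j' (Fin.castSucc_lt_castSucc_iff.mp hj)
    · refine ⟨Fin.last n, fun j hj => ?_, hlast, fun j hj => ?_⟩
      · obtain ⟨j', rfl⟩ := Fin.exists_castSucc_eq.mpr hj
        exact congrFun hinit j'
      · obtain ⟨j', rfl⟩ := Fin.exists_castSucc_eq.mpr hj.ne
        have hv : s j'.castSucc = -(s (Fin.last n) + t (Fin.last n)) := congrFun hcor j'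
        rw [hv]
        exact fin3_neg_ne hlast

lemma ite_or_add {P Q : Prop} [Decidable P] [Decidable Q] (h : ¬(P ∧ Q)) (x y : ℝ) :
    (if P ∨ Q then (if P then x else y) else 0) = (if P then x else 0) + (if Q then y else 0) := by
  by_cases hp : P <;> by_cases hq : Q <;> simp [hp, hq] <;> exact absurd ⟨hp, hq⟩ h

lemma sum_neighbor (n : ℕ) (s : Fin (n + 1) → Fin 3) (f : (Fin (n + 1) → Fin 3) → ℝ) :
    ∑ t ∈ (hanoi (n + 1)).neighborFinset s, f t
      = (∑ t ∈ (hanoi n).neighborFinset (Fin.init s), f (Fin.snoc t (s (Fin.last n))))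
        + ∑ j : Fin 3,
            if Fin.init s = corner n (-(s (Fin.last n) + j)) ∧ s (Fin.last n) ≠ j
            then f (Fin.snoc (Fin.init s) j) else 0 := by
  classical
  rw [SimpleGraph.neighborFinset_eq_filter, Finset.sum_filter]
  rw [← Equiv.sum_comp (Fin.snocEquiv (fun _ : Fin (n + 1) => Fin 3))
    (fun t => if (hanoi (n+1)).Adj s t then f t else 0)]
  rw [Fintype.sum_prod_type]
  have key : ∀ (j : Fin 3) (t' : Fin n → Fin 3),
      (if (hanoi (n+1)).Adj s (Fin.snoc t' j) then f (Fin.snoc t' j) else (0:ℝ))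
      = (if j = s (Fin.last n) ∧ (hanoi n).Adj (Fin.init s) t'
            then f (Fin.snoc t' (s (Fin.last n))) else 0)
        + (if t' = Fin.init s ∧ (Fin.init s = corner n (-(s (Fin.last n) + j))
              ∧ s (Fin.last n) ≠ j)
            then f (Fin.snoc (Fin.init s) j) else 0) := by
    intro j t'
    simp only [adj_iff, Fin.snoc_last, Fin.init_snoc]
    have : ((s (Fin.last n) = j ∧ (hanoi n).Adj (Fin.init s) t') ∨
        (Fin.init s = t' ∧ s (Fin.last n) ≠ j ∧
          Fin.init s = corner n (-(s (Fin.last n) + j)))) ↔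
        ((j = s (Fin.last n) ∧ (hanoi n).Adj (Fin.init s) t') ∨
        (t' = Fin.init s ∧ (Fin.init s = corner n (-(s (Fin.last n) + j)) ∧ s (Fin.last n) ≠ j))) := by
      constructor
      · rintro (⟨h1, h2⟩ | ⟨h1, h2, h3⟩)
        · exact Or.inl ⟨h1.symm, h2⟩
        · exact Or.inr ⟨h1.symm, h3, h2⟩
      · rintro (⟨h1, h2⟩ | ⟨h1, h2, h3⟩)
        · exact Or.inl ⟨h1.symm, h2⟩
        · exact Or.inr ⟨h1.symm, h3, h2⟩
    rw [if_congr this rfl rfl]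
    have hdisj : ¬((j = s (Fin.last n) ∧ (hanoi n).Adj (Fin.init s) t') ∧
        (t' = Fin.init s ∧ (Fin.init s = corner n (-(s (Fin.last n) + j)) ∧ s (Fin.last n) ≠ j))) := by
      rintro ⟨⟨h1, _⟩, _, _, h2⟩
      exact h2 h1.symm
    by_cases hp : (j = s (Fin.last n) ∧ (hanoi n).Adj (Fin.init s) t')
    · by_cases hq : (t' = Fin.init s ∧ (Fin.init s = corner n (-(s (Fin.last n) + j)) ∧ s (Fin.last n) ≠ j))
      · exact absurd ⟨hp, hq⟩ hdisj
      · rw [if_pos (Or.inl hp), if_pos hp, if_neg hq, add_zero, hp.1]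
    · by_cases hq : (t' = Fin.init s ∧ (Fin.init s = corner n (-(s (Fin.last n) + j)) ∧ s (Fin.last n) ≠ j))
      · rw [if_pos (Or.inr hq), if_neg hp, if_pos hq, zero_add, hq.1]
      · rw [if_neg (by tauto), if_neg hp, if_neg hq, add_zero]
  have esimp : ∀ (j : Fin 3) (t' : Fin n → Fin 3),
      Fin.snocEquiv (fun _ : Fin (n + 1) => Fin 3) (j, t') = Fin.snoc t' j :=
    fun j t' => funext fun i => rfl
  simp only [esimp, key]
  simp only [Finset.sum_add_distrib]
  congr 1
  · rw [Finset.sum_eq_single (s (Fin.last n))]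
    · rw [SimpleGraph.neighborFinset_eq_filter, Finset.sum_filter]
      simp
    · intro x _ hx
      apply Finset.sum_eq_zero
      intro x1 _
      rw [if_neg]
      tauto
    · simp
  · refine Finset.sum_congr rfl fun j _ => ?_
    rw [Finset.sum_eq_single (Fin.init s)]
    · simp
    · intro x1 _ hx1
      rw [if_neg]
      tauto
    · simp

noncomputable def D (n : ℕ) : ℝ := 5 ^ n - 3 ^ n

noncomputable def cf (m : ℕ) (q i k : Fin 3) : ℝ :=
  if i = q then (if k = q then 1 else 2 * 5 ^ m / D (m + 1))
  else if k = i then 0 else if k = q then D m / D (m + 1) else 2 * D m / D (m + 1)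

noncomputable def S (n : ℕ) (q r : Fin 3) : ℝ :=
  2 * (if q = r then 5 ^ n - 5 * 3 ^ (n - 1) else 3 ^ (n - 1)) / D n

lemma le_pow (m : ℕ) : (3:ℝ) ^ m ≤ 5 ^ m := pow_le_pow_left₀ (by norm_num) (by norm_num) m

lemma D_succ_pos (m : ℕ) : 0 < D (m + 1) := by
  have h1 := le_pow m
  have h2 : (0:ℝ) < 3 ^ m := by positivity
  simp only [D, pow_succ]
  nlinarith

lemma D_succ_ne (m : ℕ) : D (m + 1) ≠ 0 := (D_succ_pos m).ne'

set_option maxHeartbeats 2000000 in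
lemma idB (m : ℕ) (q i k j : Fin 3) (h1 : k ≠ i) (h2 : j ≠ i) (h3 : j ≠ k) :
    3 * cf (m + 1) q i k
      = (∑ c : Fin 3, cf (m + 1) q i c * S (m + 1) c k) + cf (m + 1) q j k := by
  have h := D_succ_ne m
  have hh2 := D_succ_ne (m + 1)
  have e1 : D (m+1) = 5 * 5^m - 3 * 3^m := by simp [D, pow_succ]; ring
  have e2 : D (m+2) = 25 * 5^m - 9 * 3^m := by simp [D, pow_succ]; ring
  have e0 : D m = 5^m - 3^m := rfl
  rw [e1] at h; rw [e2] at hh2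
  fin_cases q <;> fin_cases i <;> fin_cases k <;> fin_cases j <;>
    simp only [ne_eq, not_true_eq_false] at h1 h2 h3 <;>
    · norm_num [cf, S, Fin.sum_univ_three]
      simp (config := { decide := true }) only [ite_true, ite_false]
      simp only [e0, e1, show D (m+1+1) = 25 * 5^m - 9 * 3^m from e2, pow_succ]
      field_simp [mul_comm _ ((5:ℝ) ^ m)] at h hh2 ⊢
      ring

lemma idD (m : ℕ) (i k : Fin 3) : ∑ q : Fin 3, cf m q i k = 1 := by
  have h := D_succ_ne m
  have e1 : D (m+1) = 5 * 5^m - 3 * 3^m := by simp [D, pow_succ]; ring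
  have e0 : D m = 5^m - 3^m := rfl
  rw [e1] at h
  fin_cases i <;> fin_cases k <;> norm_num [cf, Fin.sum_univ_three]
  all_goals
    simp (config := { decide := true }) only [ite_true, ite_false]
    simp only [e0, e1]
    field_simp [mul_comm _ ((5:ℝ) ^ m)] at h ⊢
    ring

lemma idA (m : ℕ) (k : Fin 3) : ∑ c : Fin 3, S (m + 1) c k = 2 := by
  have h := D_succ_ne m
  have e1 : D (m+1) = 5 * 5^m - 3 * 3^m := by simp [D, pow_succ]; ring
  rw [e1] at h
  fin_cases k <;> norm_num [S, Fin.sum_univ_three, Nat.succ_sub_one]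
  all_goals
    simp (config := { decide := true }) only [ite_true, ite_false]
    simp only [e1, pow_succ]
    field_simp [mul_comm _ ((5:ℝ) ^ m)] at h ⊢
    ring

set_option maxHeartbeats 1000000 in
lemma idC (m : ℕ) (q r : Fin 3) :
    ∑ c : Fin 3, cf (m + 1) q r c * S (m + 1) c r = S (m + 2) q r := by
  have h := D_succ_ne m
  have hh2 := D_succ_ne (m + 1)
  have e1 : D (m+1) = 5 * 5^m - 3 * 3^m := by simp [D, pow_succ]; ring
  have e2 : D (m+2) = 25 * 5^m - 9 * 3^m := by simp [D, pow_succ]; ring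
  have e0 : D m = 5^m - 3^m := rfl
  rw [e1] at h; rw [e2] at hh2
  fin_cases q <;> fin_cases r <;> norm_num [cf, S, Fin.sum_univ_three, Nat.succ_sub_one]
  all_goals
    simp (config := { decide := true }) only [ite_true, ite_false]
    simp only [e0, e1, e2, show D (m+1+1) = 25 * 5^m - 9 * 3^m from e2, pow_succ]
    field_simp [mul_comm _ ((5:ℝ) ^ m)] at h hh2 ⊢
    ring

noncomputable def hh : (n : ℕ) → Fin 3 → (Fin n → Fin 3) → ℝ
  | 0, _, _ => 1 / 3
  | (m + 1), q, s => ∑ k : Fin 3, cf m q (s (Fin.last m)) k * hh m k (Fin.init s)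

lemma hh_succ (m : ℕ) (q : Fin 3) (s : Fin (m + 1) → Fin 3) :
    hh (m + 1) q s = ∑ k : Fin 3, cf m q (s (Fin.last m)) k * hh m k (Fin.init s) := rfl

lemma hh_snoc (m : ℕ) (q j : Fin 3) (t : Fin m → Fin 3) :
    hh (m + 1) q (Fin.snoc t j) = ∑ k : Fin 3, cf m q j k * hh m k t := by
  rw [hh_succ]
  simp [Fin.snoc_last, Fin.init_snoc]

lemma cf_diag (m : ℕ) (q r : Fin 3) : cf m q r r = if q = r then 1 else 0 := by
  rcases eq_or_ne q r with h | h
  · subst h; simp [cf]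
  · simp [cf, h, Ne.symm h]

lemma row0 (q r : Fin 3) : ∑ k : Fin 3, cf 0 q r k = if q = r then 3 else 0 := by
  fin_cases q <;> fin_cases r <;> norm_num [cf, D, Fin.sum_univ_three]
  all_goals simp (config := { decide := true })

lemma fin3_not_self (r j : Fin 3) : ¬(r = -(r + j) ∧ r ≠ j) := by revert r j; decide

lemma fin3_cross_iff {r i : Fin 3} (j : Fin 3) (h : r ≠ i) :
    (r = -(i + j) ∧ i ≠ j) ↔ j = -(i + r) := by revert h; revert r i j; decide

lemma fin3_third_ne {r i : Fin 3} (h : r ≠ i) : -(i + r) ≠ i ∧ -(i + r) ≠ r := by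
  revert h; revert r i; decide

lemma nbr_zero (t : Fin 0 → Fin 3) : (hanoi 0).neighborFinset t = ∅ := by
  ext u
  simp only [SimpleGraph.mem_neighborFinset, Finset.notMem_empty, iff_false]
  rintro ⟨k, -⟩
  exact k.elim0

lemma invariants (n : ℕ) :
    (∀ s, ∑ c : Fin 3, hh n c s = 1)
    ∧ (∀ q r : Fin 3, 1 ≤ n → hh n q (corner n r) = if q = r then 1 else 0)
    ∧ (∀ (q : Fin 3) s, (∀ r : Fin 3, s ≠ corner n r) →
        (∑ _t ∈ (hanoi n).neighborFinset s, (1:ℝ)) * hh n q s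
          = ∑ t ∈ (hanoi n).neighborFinset s, hh n q t)
    ∧ (∀ q r : Fin 3, ∑ t ∈ (hanoi n).neighborFinset (corner n r), hh n q t = S n q r) := by
  induction n with
  | zero =>
    refine ⟨fun s => by norm_num [hh, Fin.sum_univ_three], fun q r h => by omega,
      fun q s hne => absurd (Subsingleton.elim s (corner 0 0)) (hne 0), fun q r => ?_⟩
    rw [nbr_zero]
    simp [S, D]
  | succ n ih =>
    obtain ⟨ih0, ih1, ih2, ih3⟩ := ih
    -- P0 holds uniformly
    have hP0 : ∀ s, ∑ c : Fin 3, hh (n + 1) c s = 1 := by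
      intro s
      simp only [hh_succ]
      rw [Finset.sum_comm]
      have : ∀ k : Fin 3, ∑ c : Fin 3, cf n c (s (Fin.last n)) k * hh n k (Fin.init s)
          = hh n k (Fin.init s) := by
        intro k
        rw [← Finset.sum_mul, idD, one_mul]
      simp only [this]
      exact ih0 (Fin.init s)
    rcases Nat.eq_zero_or_pos n with rfl | hn1
    · -- n = 0 : the triangle H₁
      have hP1 : ∀ q r : Fin 3, hh 1 q (corner 1 r) = if q = r then 1 else 0 := by
        intro q r
        rw [← snoc_corner, hh_snoc]
        have hc : ∀ k, hh 0 k (corner 0 r) = 1/3 := fun k => rfl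
        simp only [hc]
        rw [← Finset.sum_mul, row0]
        split_ifs <;> norm_num
      have hcor : ∀ s : Fin 1 → Fin 3, s = corner 1 (s 0) := by
        intro s
        funext j
        have : j = 0 := Subsingleton.elim _ _
        rw [this]
        rfl
      refine ⟨hP0, fun q r _ => hP1 q r, fun q s hne => absurd (hcor s) (hne (s 0)), ?_⟩
      intro q r
      rw [sum_neighbor]
      have hlast : corner 1 r (Fin.last 0) = r := rfl
      rw [nbr_zero, Finset.sum_empty, zero_add]
      have hinit : Fin.init (corner 1 r) = corner 0 r := init_corner 0 r
      have heval : ∀ j : Fin 3,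
          (if Fin.init (corner 1 r) = corner 0 (-(corner 1 r (Fin.last 0) + j))
              ∧ corner 1 r (Fin.last 0) ≠ j
            then hh 1 q (Fin.snoc (Fin.init (corner 1 r)) j) else 0)
          = if r ≠ j then (if q = j then (1:ℝ) else 0) else 0 := by
        intro j
        have h1 : Fin.init (corner 1 r) = corner 0 (-(corner 1 r (Fin.last 0) + j)) :=
          Subsingleton.elim _ _
        have h2 : Fin.snoc (Fin.init (corner 1 r)) j = corner 1 j := by
          rw [hinit, show corner 0 r = corner 0 j from Subsingleton.elim _ _, snoc_corner]
        rw [h2]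
        by_cases hrj : r ≠ j
        · rw [if_pos ⟨h1, hlast ▸ hrj⟩, if_pos hrj, hP1 q j]
        · rw [if_neg (fun hc => hrj (hlast ▸ hc.2)), if_neg hrj]
      simp only [heval]
      have : S 1 q r = if q = r then 0 else 1 := by
        fin_cases q <;> fin_cases r <;> norm_num [S, D]
        all_goals simp (config := { decide := true })
        all_goals norm_num
      rw [this]
      rcases eq_or_ne q r with rfl | hqr
      · rw [if_pos rfl]
        apply Finset.sum_eq_zero
        intro j _
        rcases eq_or_ne q j with rfl | hqj
        · simp
        · simp [hqj]
      · rw [if_neg hqr, Finset.sum_eq_single q]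
        · simp [Ne.symm hqr]
        · intro j _ hj
          simp [Ne.symm hj]
        · simp
    · -- n ≥ 1
      obtain ⟨m, rfl⟩ : ∃ m, n = m + 1 := ⟨n - 1, by omega⟩
      set n := m + 1
      -- P1
      have hP1 : ∀ q r : Fin 3, hh (n + 1) q (corner (n + 1) r) = if q = r then 1 else 0 := by
        intro q r
        rw [← snoc_corner, hh_snoc]
        have hc : ∀ k, hh n k (corner n r) = if k = r then (1:ℝ) else 0 :=
          fun k => ih1 k r hn1
        simp only [hc, mul_ite, mul_one, mul_zero]
        rw [Finset.sum_ite_eq' Finset.univ r (fun k => cf n q r k)]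
        simp [cf_diag]
      refine ⟨hP0, fun q r _ => hP1 q r, ?_, ?_⟩
      · -- P2
        intro q s hne
        rw [sum_neighbor n s (fun _ => (1:ℝ)), sum_neighbor n s (hh (n + 1) q)]
        set i := s (Fin.last n) with hi
        set s' := Fin.init s with hs'
        by_cases hc : ∃ r : Fin 3, s' = corner n r
        · obtain ⟨r, hr⟩ := hc
          have hri : r ≠ i := by
            intro hri
            exact hne i (by rw [eq_corner_iff]; exact ⟨by rw [← hs', hr, hri], rfl⟩)
          -- cross condition is j = -(i + r)
          have hcond : ∀ j : Fin 3,
              (s' = corner n (-(i + j)) ∧ i ≠ j) ↔ j = -(i + r) := by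
            intro j
            rw [hr]
            constructor
            · rintro ⟨h1, h2⟩
              exact (fin3_cross_iff j hri).mp ⟨corner_inj hn1 h1, h2⟩
            · intro hj
              obtain ⟨hx, hy⟩ := (fin3_cross_iff j hri).mpr hj
              exact ⟨by rw [hx], hy⟩
          -- the two cross sums
          have hcross : ∀ f : Fin 3 → ℝ, (∑ j : Fin 3,
              if s' = corner n (-(i + j)) ∧ i ≠ j then f j else 0) = f (-(i + r)) := by
            intro f
            rw [Finset.sum_congr rfl (fun j _ => if_congr (hcond j) rfl rfl),
              Finset.sum_ite_eq' Finset.univ (-(i + r)) f]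
            simp
          rw [hcross, hcross]
          -- within-copy sums
          have hwithin : ∀ g : (Fin n → Fin 3) → ℝ,
              ∑ t ∈ (hanoi n).neighborFinset s', g t
                = ∑ t ∈ (hanoi n).neighborFinset (corner n r), g t := by
            intro g; rw [hr]
          -- degree part : ∑ 1 over neighbors of corner = 2
          have hdeg : (∑ _t ∈ (hanoi n).neighborFinset s', (1:ℝ)) = 2 := by
            rw [hwithin]
            have : ∀ t ∈ (hanoi n).neighborFinset (corner n r), (1:ℝ)
                = ∑ c : Fin 3, hh n c t := fun t _ => (ih0 t).symm
            rw [Finset.sum_congr rfl this, Finset.sum_comm]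
            have : ∀ c : Fin 3, ∑ t ∈ (hanoi n).neighborFinset (corner n r), hh n c t
                = S n c r := fun c => ih3 c r
            simp only [this]
            exact idA m r
          rw [hdeg]
          have hval : hh (n + 1) q s = cf n q i r := by
            rw [hh_succ, ← hi, ← hs', hr]
            have hc2 : ∀ k, hh n k (corner n r) = if k = r then (1:ℝ) else 0 :=
              fun k => ih1 k r hn1
            simp only [hc2, mul_ite, mul_one, mul_zero]
            rw [Finset.sum_ite_eq' Finset.univ r (fun k => cf n q i k)]
            simp
          have hsnoc : ∀ j t, hh (n + 1) q (Fin.snoc t j) = ∑ k : Fin 3, cf n q j k * hh n k t :=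
            fun j t => hh_snoc n q j t
          rw [hsnoc, hval]
          have hrhs1 : ∑ t ∈ (hanoi n).neighborFinset s', hh (n + 1) q (Fin.snoc t i)
              = ∑ k : Fin 3, cf n q i k * S n k r := by
            rw [hwithin]
            rw [Finset.sum_congr rfl (fun t _ => hsnoc i t), Finset.sum_comm]
            refine Finset.sum_congr rfl fun k _ => ?_
            rw [← Finset.mul_sum, ih3 k r]
          rw [hrhs1]
          have hcrossval : ∑ k : Fin 3, cf n q (-(i + r)) k * hh n k s' = cf n q (-(i + r)) r := by
            rw [hr]
            have hc2 : ∀ k, hh n k (corner n r) = if k = r then (1:ℝ) else 0 :=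
              fun k => ih1 k r hn1
            simp only [hc2, mul_ite, mul_one, mul_zero]
            rw [Finset.sum_ite_eq' Finset.univ r (fun k => cf n q (-(i + r)) k)]
            simp
          rw [hcrossval]
          have hthird := fin3_third_ne hri
          have := idB m q i r (-(i + r)) hri hthird.1 hthird.2
          rw [show (2:ℝ) + 1 = 3 by norm_num]
          exact this
        · -- s' not a corner
          push_neg at hc
          have hcross0 : ∀ f : Fin 3 → ℝ, (∑ j : Fin 3,
              if s' = corner n (-(i + j)) ∧ i ≠ j then f j else 0) = 0 := by
            intro f
            apply Finset.sum_eq_zero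
            intro j _
            rw [if_neg (fun hcc => (hc _) hcc.1)]
          rw [hcross0, hcross0, add_zero, add_zero]
          have hsnoc : ∀ j t, hh (n + 1) q (Fin.snoc t j) = ∑ k : Fin 3, cf n q j k * hh n k t :=
            fun j t => hh_snoc n q j t
          have hval : hh (n + 1) q s = ∑ k : Fin 3, cf n q i k * hh n k s' := by
            rw [hh_succ]
          rw [hval]
          rw [Finset.sum_congr rfl (fun t _ => hsnoc i t), Finset.sum_comm]
          rw [Finset.mul_sum]
          refine Finset.sum_congr rfl fun k _ => ?_
          rw [← Finset.mul_sum, ← ih2 k s' hc]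
          ring
      · -- P3
        intro q r
        rw [← snoc_corner] at *
        rw [sum_neighbor]
        have hlast : Fin.snoc (α := fun _ => Fin 3) (corner n r) r (Fin.last n) = r :=
          Fin.snoc_last _ _
        have hinit : Fin.init (Fin.snoc (α := fun _ => Fin 3) (corner n r) r) = corner n r :=
          Fin.init_snoc _ _
        have hcross0 : (∑ j : Fin 3,
            if Fin.init (Fin.snoc (α := fun _ => Fin 3) (corner n r) r)
                = corner n (-(Fin.snoc (α := fun _ => Fin 3) (corner n r) r (Fin.last n) + j))
              ∧ Fin.snoc (α := fun _ => Fin 3) (corner n r) r (Fin.last n) ≠ j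
            then hh (n + 1) q (Fin.snoc (Fin.init
              (Fin.snoc (α := fun _ => Fin 3) (corner n r) r)) j) else 0) = 0 := by
          apply Finset.sum_eq_zero
          intro j _
          rw [if_neg]
          rw [hinit, hlast]
          rintro ⟨h1, h2⟩
          exact fin3_not_self r j ⟨corner_inj hn1 h1, h2⟩
        rw [hcross0, add_zero]
        have : ∀ t ∈ (hanoi n).neighborFinset (Fin.init
            (Fin.snoc (α := fun _ => Fin 3) (corner n r) r)),
            hh (n + 1) q (Fin.snoc t (Fin.snoc (α := fun _ => Fin 3) (corner n r) r (Fin.last n)))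
              = ∑ k : Fin 3, cf n q r k * hh n k t := by
          intro t _
          rw [hlast, hh_snoc]
        rw [Finset.sum_congr rfl this]
        rw [Finset.sum_comm]
        have : ∀ k : Fin 3, (∑ t ∈ (hanoi n).neighborFinset (Fin.init
            (Fin.snoc (α := fun _ => Fin 3) (corner n r) r)), cf n q r k * hh n k t)
            = cf n q r k * S n k r := by
          intro k
          rw [← Finset.mul_sum, hinit, ih3 k r]
        simp only [this]
        exact idC m q r

lemma exists_adj {n : ℕ} (hn : 1 ≤ n) (s : Fin n → Fin 3) : ∃ t, (hanoi n).Adj s t := by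
  refine ⟨Function.update s ⟨0, hn⟩ (s ⟨0, hn⟩ + 1), ⟨0, hn⟩, fun j hj => ?_, ?_, fun j hj => ?_⟩
  · rw [Function.update_of_ne hj]
  · rw [Function.update_self]
    have : ∀ x : Fin 3, x ≠ x + 1 := by decide
    exact this _
  · exact absurd hj (by simp [Fin.lt_def])

lemma degree_ne {n : ℕ} (hn : 1 ≤ n) (s : Fin n → Fin 3) :
    ((hanoi n).degree s : ℝ) ≠ 0 := by
  obtain ⟨t, ht⟩ := exists_adj hn s
  have : 0 < (hanoi n).degree s :=
    Finset.card_pos.mpr ⟨t, (SimpleGraph.mem_neighborFinset _ _ _).mpr ht⟩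
  positivity

lemma degree_cast (n : ℕ) (s : Fin n → Fin 3) :
    ((hanoi n).degree s : ℝ) = ∑ _t ∈ (hanoi n).neighborFinset s, (1:ℝ) := by
  rw [SimpleGraph.degree, Finset.sum_const, nsmul_eq_mul, mul_one]

lemma green {V : Type*} [Fintype V] [DecidableEq V] (G : SimpleGraph V) [DecidableRel G.Adj]
    (f g : V → ℝ) :
    ∑ s, f s * ∑ t ∈ G.neighborFinset s, g t = ∑ s, g s * ∑ t ∈ G.neighborFinset s, f t := by
  have key : ∀ (f g : V → ℝ), ∑ s, f s * ∑ t ∈ G.neighborFinset s, g t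
      = ∑ s, ∑ t, if G.Adj s t then f s * g t else 0 := by
    intro f g
    refine Finset.sum_congr rfl fun s _ => ?_
    rw [Finset.mul_sum, SimpleGraph.neighborFinset_eq_filter, Finset.sum_filter]
  rw [key, key, Finset.sum_comm]
  refine Finset.sum_congr rfl fun s _ => Finset.sum_congr rfl fun t _ => ?_
  exact if_congr (G.adj_comm t s) (mul_comm (f t) (g s)) rfl

end HanoiAux

open HanoiAux in
/-- the probability `p₁(n)` that the random walk started at `A`, after at
least one move, first returns to the corner set at `A` equals
`(5^n − 5·3^(n−1))/(5^n − 3^n)`. -/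
theorem hanoi_p_one (n : ℕ) (hn : 1 ≤ n)
    (p : (Fin n → Fin 3) → ℝ)
    (hA : p (corner n 0) = 1) (hB : p (corner n 1) = 0) (hC : p (corner n 2) = 0)
    (hrec : ∀ s, (∀ q : Fin 3, s ≠ corner n q) →
      p s = (1 / ((hanoi n).degree s : ℝ)) * ∑ t ∈ (hanoi n).neighborFinset s, p t) :
    (1 / 2 : ℝ) * ∑ t ∈ (hanoi n).neighborFinset (corner n 0), p t
      = ((5 : ℝ) ^ n - 5 * 3 ^ (n - 1)) / ((5 : ℝ) ^ n - 3 ^ n) := by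
  classical
  obtain ⟨hP0, hP1, hP2, hP3⟩ := invariants n
  set h0 : (Fin n → Fin 3) → ℝ := hh n 0 with hh0def
  have hzero : ∑ s : Fin n → Fin 3,
      (h0 s * ∑ t ∈ (hanoi n).neighborFinset s, p t
        - p s * ∑ t ∈ (hanoi n).neighborFinset s, h0 t) = 0 := by
    rw [Finset.sum_sub_distrib, green (hanoi n) h0 p, sub_self]
  have hvanish : ∀ s : Fin n → Fin 3, (∀ q : Fin 3, s ≠ corner n q) →
      h0 s * ∑ t ∈ (hanoi n).neighborFinset s, p t
        - p s * ∑ t ∈ (hanoi n).neighborFinset s, h0 t = 0 := by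
    intro s hs
    have hdeg := degree_ne hn s
    have hps : ∑ t ∈ (hanoi n).neighborFinset s, p t = ((hanoi n).degree s : ℝ) * p s := by
      rw [hrec s hs]
      field_simp
    have hhs : ∑ t ∈ (hanoi n).neighborFinset s, h0 t = ((hanoi n).degree s : ℝ) * h0 s := by
      rw [← hP2 0 s hs, ← degree_cast]
    rw [hps, hhs]
    ring
  -- reduce the global sum to the three corners
  set cs : Finset (Fin n → Fin 3) := {corner n 0, corner n 1, corner n 2} with hcs
  have hsub : ∑ s ∈ cs,
      (h0 s * ∑ t ∈ (hanoi n).neighborFinset s, p t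
        - p s * ∑ t ∈ (hanoi n).neighborFinset s, h0 t) = 0 := by
    rw [← hzero]
    apply Finset.sum_subset (Finset.subset_univ cs)
    intro s _ hscs
    apply hvanish
    intro q hq
    apply hscs
    rw [hcs, hq]
    fin_cases q <;> simp
  have hne01 : corner n 0 ≠ corner n 1 := fun h => by simpa using corner_inj hn h
  have hne02 : corner n 0 ≠ corner n 2 := fun h => by simpa using corner_inj hn h
  have hne12 : corner n 1 ≠ corner n 2 := fun h => by simpa using corner_inj hn h
  have hexp : ∑ s ∈ cs,
      (h0 s * ∑ t ∈ (hanoi n).neighborFinset s, p t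
        - p s * ∑ t ∈ (hanoi n).neighborFinset s, h0 t)
      = (h0 (corner n 0) * ∑ t ∈ (hanoi n).neighborFinset (corner n 0), p t
          - p (corner n 0) * ∑ t ∈ (hanoi n).neighborFinset (corner n 0), h0 t)
        + ((h0 (corner n 1) * ∑ t ∈ (hanoi n).neighborFinset (corner n 1), p t
          - p (corner n 1) * ∑ t ∈ (hanoi n).neighborFinset (corner n 1), h0 t)
        + (h0 (corner n 2) * ∑ t ∈ (hanoi n).neighborFinset (corner n 2), p t
          - p (corner n 2) * ∑ t ∈ (hanoi n).neighborFinset (corner n 2), h0 t)) := by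
    rw [hcs]
    rw [Finset.sum_insert (by simp [hne01, hne02]), Finset.sum_insert (by simp [hne12])]
    rw [Finset.sum_singleton]
  have h0A : h0 (corner n 0) = 1 := by
    have := hP1 0 0 hn
    simpa using this
  have h0B : h0 (corner n 1) = 0 := by
    have := hP1 0 1 hn
    simpa using this
  have h0C : h0 (corner n 2) = 0 := by
    have := hP1 0 2 hn
    simpa using this
  have hNh0A : ∑ t ∈ (hanoi n).neighborFinset (corner n 0), h0 t = S n 0 0 := hP3 0 0
  rw [hexp, h0A, h0B, h0C, hA, hB, hC, hNh0A] at hsub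
  have hmain : ∑ t ∈ (hanoi n).neighborFinset (corner n 0), p t = S n 0 0 := by
    rw [← sub_eq_zero]
    calc _ = 1 * ∑ t ∈ (hanoi n).neighborFinset (corner n 0), p t - 1 * S n 0 0
        + (0 * ∑ t ∈ (hanoi n).neighborFinset (corner n 1), p t
          - 0 * ∑ t ∈ (hanoi n).neighborFinset (corner n 1), h0 t
        + (0 * ∑ t ∈ (hanoi n).neighborFinset (corner n 2), p t
          - 0 * ∑ t ∈ (hanoi n).neighborFinset (corner n 2), h0 t)) := by ring
    _ = 0 := hsub
  rw [hmain]
  have hS : S n 0 0 = 2 * ((5:ℝ) ^ n - 5 * 3 ^ (n - 1)) / ((5:ℝ) ^ n - 3 ^ n) := by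
    rw [S, if_pos rfl, D]
  rw [hS]
  ring
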